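/- arXiv:2202.04020 — 2 statements merged into one kernel-verified Lean document; each statement's English description precedes it below -/
import Mathlib

section
/- Let M be an n×n real symmetric matrix with eigen-decomposition M = Σ_{i=1}^n μ_i u_iu_iᵀ, where μ₁ ≥ μ₂ ≥ ... ≥ μ_n and {u_i} is orthonormal, and let X = Σ_{i=1}^k u_iu_iᵀ be the orthogonal projection onto the span of the top k eigenvectors of M. Then for every Z ∈ P_{n,k}: ⟨X − Z, M⟩ ≤ ‖Z − X‖_F²·‖M‖₂, where ⟨A, B⟩ = Tr(AB) is the trace inner product. -/
open Matrix

noncomputable def frobNorm {m : ℕ} (A : Matrix (Fin m) (Fin m) ℝ) : ℝ :=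
  Real.sqrt (∑ i, ∑ j, (A i j) ^ 2)

/-- `eigval A j` is the `j`-th largest eigenvalue (1-indexed) of the symmetric matrix `A`. -/
noncomputable def eigval {m : ℕ} (A : Matrix (Fin m) (Fin m) ℝ) (j : ℕ) : ℝ :=
  if h : A.IsHermitian then
    if hj : m - j < m then (h.eigenvalues ∘ Tuple.sort h.eigenvalues) ⟨m - j, hj⟩ else 0
  else 0

/-- spectral norm: largest singular value. -/
noncomputable def specNorm {m : ℕ} (A : Matrix (Fin m) (Fin m) ℝ) : ℝ :=
  Real.sqrt (eigval (Aᵀ * A) 1)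

/-- `P_{n,k}`: rank-`k` orthogonal projection matrices. -/
def ProjSet (n k : ℕ) : Set (Matrix (Fin n) (Fin n) ℝ) :=
  {X | ∃ Q : Matrix (Fin n) (Fin k) ℝ, Qᵀ * Q = 1 ∧ X = Q * Qᵀ}

/-- The Fantope `F_{n,k}`. -/
def Fantope (n k : ℕ) : Set (Matrix (Fin n) (Fin n) ℝ) :=
  {X | X.IsSymm ∧ X.PosSemidef ∧ (1 - X).PosSemidef ∧ X.trace = (k : ℝ)}

/-! In an orthonormal eigenbasis `u` of `M`, both sides split into sums over `i`:
`⟨X - Z, M⟩ = ∑ μᵢ uᵢᵀ(X - Z)uᵢ` and `‖Z - X‖_F² = ∑ ‖(Z - X)uᵢ‖²`. Since `X uᵢ` is `uᵢ` or `0`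
and `Z` is an orthogonal projection, `|uᵢᵀ(X - Z)uᵢ| = ‖(Z - X)uᵢ‖²`, while `|μᵢ| ≤ ‖M‖₂`;
so the inequality holds term by term. -/

theorem isSymm_sum_smul_vecMulVec {R ι n : Type*} [CommSemiring R] (s : Finset ι) (c : ι → R)
    (u : ι → n → R) : (∑ i ∈ s, c i • vecMulVec (u i) (u i)).IsSymm := by
  simp [IsSymm, transpose_sum, transpose_vecMulVec]

section Orthonormal

variable {R : Type*} [CommRing R] {n : Type*} [Fintype n] [DecidableEq n] {u : n → n → R}

theorem sum_vecMulVec_self_eq_one (hu : ∀ i j, u i ⬝ᵥ u j = if i = j then 1 else 0) :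
    ∑ i, vecMulVec (u i) (u i) = 1 := by
  have h : of u * (of u)ᵀ = 1 := by
    ext i j
    simpa [mul_apply, one_apply, dotProduct] using hu i j
  rw [← mul_eq_one_comm.mp h]
  ext a b
  simp [mul_apply, vecMulVec_apply, Matrix.sum_apply]

theorem trace_eq_sum_dotProduct_mulVec (hu : ∀ i j, u i ⬝ᵥ u j = if i = j then 1 else 0)
    (A : Matrix n n R) : A.trace = ∑ i, u i ⬝ᵥ (A *ᵥ u i) := by
  conv_lhs => rw [← mul_one A, ← sum_vecMulVec_self_eq_one hu]
  simp [Matrix.mul_sum, trace_sum, mul_vecMulVec, dotProduct_comm]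

theorem sum_smul_vecMulVec_mulVec (hu : ∀ i j, u i ⬝ᵥ u j = if i = j then 1 else 0)
    (s : Finset n) (c : n → R) (j : n) :
    (∑ i ∈ s, c i • vecMulVec (u i) (u i)) *ᵥ u j = if j ∈ s then c j • u j else 0 := by
  simp [sum_mulVec, smul_mulVec, vecMulVec_mulVec, hu]

end Orthonormal

theorem isIdempotentElem_mul_transpose {R m k : Type*} [Semiring R] [Fintype m] [Fintype k]
    [DecidableEq k] {Q : Matrix m k R} (hQ : Qᵀ * Q = 1) : IsIdempotentElem (Q * Qᵀ) := by
  rw [IsIdempotentElem, Matrix.mul_assoc, ← Matrix.mul_assoc Qᵀ, hQ, Matrix.one_mul]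

theorem Matrix.IsSymm.dotProduct_mulVec_self_of_isIdempotentElem {R : Type*} [CommSemiring R]
    {n : Type*} [Fintype n] {Z : Matrix n n R} (hZ : Z.IsSymm) (hZ' : IsIdempotentElem Z)
    (v : n → R) : (Z *ᵥ v) ⬝ᵥ (Z *ᵥ v) = v ⬝ᵥ (Z *ᵥ v) := by
  calc (Z *ᵥ v) ⬝ᵥ (Z *ᵥ v) = v ⬝ᵥ (Zᵀ *ᵥ (Z *ᵥ v)) := by
        rw [dotProduct_mulVec v Zᵀ, vecMul_transpose]
    _ = v ⬝ᵥ (Z *ᵥ v) := by rw [mulVec_mulVec, hZ.eq, hZ'.eq]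

theorem abs_dotProduct_sub_mulVec_eq_dotProduct_self {n : Type*} [Fintype n]
    {Z X : Matrix n n ℝ} (hZ : Z.IsSymm) (hZ' : IsIdempotentElem Z) {v : n → ℝ}
    (hv : v ⬝ᵥ v = 1) (hXv : X *ᵥ v = v ∨ X *ᵥ v = 0) :
    |v ⬝ᵥ ((X - Z) *ᵥ v)| = ((Z - X) *ᵥ v) ⬝ᵥ ((Z - X) *ᵥ v) := by
  have hw : 0 ≤ ((Z - X) *ᵥ v) ⬝ᵥ ((Z - X) *ᵥ v) := by
    simpa using dotProduct_star_self_nonneg ((Z - X) *ᵥ v)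
  have hZv := hZ.dotProduct_mulVec_self_of_isIdempotentElem hZ' v
  rcases hXv with hXv | hXv
  · have h : v ⬝ᵥ ((X - Z) *ᵥ v) = ((Z - X) *ᵥ v) ⬝ᵥ ((Z - X) *ᵥ v) := by
      simp only [sub_mulVec, hXv, dotProduct_sub, sub_dotProduct, hv, hZv, dotProduct_comm _ v]
      ring
    rw [h, abs_of_nonneg hw]
  · have h : v ⬝ᵥ ((X - Z) *ᵥ v) = -(((Z - X) *ᵥ v) ⬝ᵥ ((Z - X) *ᵥ v)) := by
      simp only [sub_mulVec, hXv, sub_zero, zero_sub, dotProduct_neg, hZv]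
    rw [h, abs_neg, abs_of_nonneg hw]

theorem frobNorm_sq_eq_sum_dotProduct {m : ℕ} {u : Fin m → Fin m → ℝ}
    (hu : ∀ i j, u i ⬝ᵥ u j = if i = j then 1 else 0) (A : Matrix (Fin m) (Fin m) ℝ) :
    frobNorm A ^ 2 = ∑ i, (A *ᵥ u i) ⬝ᵥ (A *ᵥ u i) := by
  have h : frobNorm A ^ 2 = (Aᵀ * A).trace := by
    rw [frobNorm, Real.sq_sqrt (by positivity), Finset.sum_comm]
    simp [trace, mul_apply, sq]
  rw [h, trace_eq_sum_dotProduct_mulVec hu]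
  simp [← mulVec_mulVec, dotProduct_mulVec _ Aᵀ, vecMul_transpose]

theorem eigenvalues_le_eigval_one {m : ℕ} {B : Matrix (Fin m) (Fin m) ℝ} (hB : B.IsHermitian)
    (i : Fin m) : hB.eigenvalues i ≤ eigval B 1 := by
  have hm : m - 1 < m := by have := i.isLt; omega
  rw [eigval, dif_pos hB, dif_pos hm]
  set σ := Tuple.sort hB.eigenvalues
  calc hB.eigenvalues i = (hB.eigenvalues ∘ σ) (σ.symm i) := by simp
    _ ≤ _ := Tuple.monotone_sort hB.eigenvalues (Fin.le_def.mpr (by simp; omega))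

theorem abs_le_specNorm_of_mulVec_eq_smul {m : ℕ} {M : Matrix (Fin m) (Fin m) ℝ} (hM : M.IsSymm)
    {v : Fin m → ℝ} (hv : v ≠ 0) {μ : ℝ} (h : M *ᵥ v = μ • v) : |μ| ≤ specNorm M := by
  have hB : (Mᵀ * M).IsHermitian := by
    simpa [conjTranspose_eq_transpose_of_trivial] using isHermitian_conjTranspose_mul_self M
  have hspec : μ ^ 2 ∈ spectrum ℝ (Mᵀ * M) := by
    rw [← spectrum_toLin']
    refine (Module.End.hasEigenvalue_of_hasEigenvector
      ⟨Module.End.mem_eigenspace_iff.mpr ?_, hv⟩).mem_spectrum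
    simp [hM.eq, h, smul_smul, sq]
  rw [hB.spectrum_real_eq_range_eigenvalues] at hspec
  obtain ⟨i, hi⟩ := hspec
  calc |μ| = √(μ ^ 2) := (Real.sqrt_sq_eq_abs μ).symm
    _ ≤ √(eigval (Mᵀ * M) 1) := Real.sqrt_le_sqrt (hi ▸ eigenvalues_le_eigval_one hB i)

theorem stmt14_general {n k : ℕ}
    (μ : Fin n → ℝ)
    (u : Fin n → (Fin n → ℝ))
    (hu : ∀ i j : Fin n, u i ⬝ᵥ u j = if i = j then (1 : ℝ) else 0)
    (M : Matrix (Fin n) (Fin n) ℝ)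
    (hM : M = ∑ i : Fin n, μ i • vecMulVec (u i) (u i))
    (X : Matrix (Fin n) (Fin n) ℝ)
    (hX : X = ∑ i ∈ Finset.univ.filter (fun i : Fin n => (i : ℕ) < k),
      vecMulVec (u i) (u i)) :
    ∀ Z ∈ ProjSet n k,
      ((X - Z) * M).trace ≤ frobNorm (Z - X) ^ 2 * specNorm M := by
  rintro Z ⟨Q, hQ, hZQ⟩
  have hZ : Z.IsSymm := by rw [hZQ, IsSymm, transpose_mul, transpose_transpose]
  have hZ' : IsIdempotentElem Z := by rw [hZQ]; exact isIdempotentElem_mul_transpose hQ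
  have huu (i : Fin n) : u i ⬝ᵥ u i = 1 := by simp [hu]
  have hMu (i : Fin n) : M *ᵥ u i = μ i • u i := by
    simpa [hM] using sum_smul_vecMulVec_mulVec hu Finset.univ μ i
  have hXu (i : Fin n) : X *ᵥ u i = u i ∨ X *ᵥ u i = 0 := by
    have := sum_smul_vecMulVec_mulVec hu {i : Fin n | (i : ℕ) < k} 1 i
    simp only [Pi.one_apply, one_smul, ← hX] at this
    split_ifs at this <;> simp [this]
  have hμ (i : Fin n) : |μ i| ≤ specNorm M :=
    abs_le_specNorm_of_mulVec_eq_smul (hM ▸ isSymm_sum_smul_vecMulVec _ _ _)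
      (fun h => by simpa [h] using huu i) (hMu i)
  rw [trace_eq_sum_dotProduct_mulVec hu, frobNorm_sq_eq_sum_dotProduct hu, Finset.sum_mul]
  refine Finset.sum_le_sum fun i _ => ?_
  calc u i ⬝ᵥ (((X - Z) * M) *ᵥ u i) = μ i * (u i ⬝ᵥ ((X - Z) *ᵥ u i)) := by
        rw [← mulVec_mulVec, hMu, mulVec_smul, dotProduct_smul, smul_eq_mul]
    _ ≤ |μ i| * |u i ⬝ᵥ ((X - Z) *ᵥ u i)| := by rw [← abs_mul]; exact le_abs_self _
    _ ≤ specNorm M * |u i ⬝ᵥ ((X - Z) *ᵥ u i)| := by gcongr; exact hμ i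
    _ = _ := by rw [abs_dotProduct_sub_mulVec_eq_dotProduct_self hZ hZ' (huu i) (hXu i), mul_comm]

theorem stmt14 {n k : ℕ} (hk : 0 < k) (hkn : k ≤ n)
    (μ : Fin n → ℝ) (hμ : Antitone μ)
    (u : Fin n → (Fin n → ℝ))
    (hu : ∀ i j : Fin n, u i ⬝ᵥ u j = if i = j then (1 : ℝ) else 0)
    (M : Matrix (Fin n) (Fin n) ℝ)
    (hM : M = ∑ i : Fin n, μ i • vecMulVec (u i) (u i))
    (X : Matrix (Fin n) (Fin n) ℝ)
    (hX : X = ∑ i ∈ Finset.univ.filter (fun i : Fin n => (i : ℕ) < k),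
      vecMulVec (u i) (u i)) :
    ∀ Z ∈ ProjSet n k,
      ((X - Z) * M).trace ≤ frobNorm (Z - X) ^ 2 * specNorm M :=
  stmt14_general μ u hu M hM X hX
end

section
/- Let X ∈ F_{n,k} and assume λ_{n−k}(∇f(X)) − λ_{n−k+1}(∇f(X)) ≥ δ_X for some δ_X > 0. Then for any V ∈ argmin_{P∈P_{n,k}} ⟨P, ∇f(X)⟩, it holds that ⟨X − V, ∇f(X)⟩ ≥ (δ_X/2)·‖X − V‖_F². -/
/-!
Diagonalise `G = ∇f(X)` as `U diag(d) Uᵀ` and let `P` project onto the eigenvectors of the `k`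
smallest eigenvalues, so that `d ≤ a` on them and `d ≥ b` on the others, where `b - a` is the
eigengap. For `Z` in the Fantope the diagonal `y` of `Uᵀ Z U` satisfies `0 ≤ y ≤ 1`, `∑ y = k`,
and comparing `⟨Z, G⟩ = ∑ y d` termwise with `⟨P, G⟩`, the sum of the `k` smallest eigenvalues,
gives `⟨Z - P, G⟩ ≥ (b - a) (k - ⟨Z, P⟩)`.
For a minimiser `Z = V` this forces `⟨V, P⟩ = k`, i.e. `‖V - P‖² = 2k - 2⟨V, P⟩ = 0`, so `V = P`.
For `Z = X` it is the claim, since `tr X² ≤ tr X = k` gives `‖X - P‖² ≤ 2 (k - ⟨X, P⟩)`.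
-/

open Matrix

open scoped MatrixOrder in
theorem Matrix.PosSemidef.trace_mul_nonneg {m : Type*} [Fintype m] [DecidableEq m]
    {A B : Matrix m m ℝ} (hA : A.PosSemidef) (hB : B.PosSemidef) : 0 ≤ (A * B).trace := by
  obtain ⟨C, rfl⟩ := CStarAlgebra.nonneg_iff_eq_star_mul_self.mp hA.nonneg
  rw [star_eq_conjTranspose, Matrix.mul_assoc, trace_mul_comm]
  exact (hB.mul_mul_conjTranspose_same C).trace_nonneg

theorem frobNorm_sq {m : ℕ} (A : Matrix (Fin m) (Fin m) ℝ) : frobNorm A ^ 2 = (Aᵀ * A).trace := by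
  rw [frobNorm, Real.sq_sqrt (by positivity), Finset.sum_comm]
  simp only [trace, diag, mul_apply, transpose_apply, sq]

section ProjSet

variable {n k : ℕ} {P : Matrix (Fin n) (Fin n) ℝ}

theorem transpose_eq_of_mem_projSet (hP : P ∈ ProjSet n k) : Pᵀ = P := by
  obtain ⟨Q, -, rfl⟩ := hP
  rw [transpose_mul, transpose_transpose]

theorem mul_self_of_mem_projSet (hP : P ∈ ProjSet n k) : P * P = P := by
  obtain ⟨Q, hQ, rfl⟩ := hP
  rw [Matrix.mul_assoc, ← Matrix.mul_assoc Qᵀ, hQ, Matrix.one_mul]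

theorem trace_of_mem_projSet (hP : P ∈ ProjSet n k) : P.trace = k := by
  obtain ⟨Q, hQ, rfl⟩ := hP
  rw [trace_mul_comm, hQ, trace_one, Fintype.card_fin]

theorem projSet_subset_fantope : ProjSet n k ⊆ Fantope n k := by
  intro P hP
  have hsymm := transpose_eq_of_mem_projSet hP
  have hidem := mul_self_of_mem_projSet hP
  refine ⟨hsymm, ?_, ?_, trace_of_mem_projSet hP⟩
  · simpa [hsymm, hidem] using posSemidef_self_mul_conjTranspose P
  · have hcompl : (1 - P) * (1 - P)ᵀ = 1 - P := by
      rw [transpose_sub, transpose_one, hsymm, sub_mul, mul_sub, mul_sub, hidem]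
      simp
    have := posSemidef_self_mul_conjTranspose (1 - P)
    rwa [conjTranspose_eq_transpose_of_trivial, hcompl] at this

end ProjSet

section Fantope

variable {n k : ℕ} {Z : Matrix (Fin n) (Fin n) ℝ}

theorem trace_mul_le_of_mem_fantope (hZ : Z ∈ Fantope n k) {W : Matrix (Fin n) (Fin n) ℝ}
    (hW : (1 - W).PosSemidef) : (Z * W).trace ≤ k := by
  have := hZ.2.1.trace_mul_nonneg hW
  rw [mul_sub, mul_one, trace_sub, hZ.2.2.2] at this
  linarith

theorem conj_mem_fantope (hZ : Z ∈ Fantope n k) {U : Matrix (Fin n) (Fin n) ℝ}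
    (hU : Uᵀ * U = 1) : Uᵀ * Z * U ∈ Fantope n k := by
  obtain ⟨hsymm, hpsd, hcompl, htr⟩ := hZ
  refine ⟨?_, ?_, ?_, ?_⟩
  · rw [IsSymm, transpose_mul, transpose_mul, transpose_transpose, hsymm.eq, Matrix.mul_assoc]
  · simpa using hpsd.conjTranspose_mul_mul_same U
  · simpa [mul_sub, sub_mul, hU] using hcompl.conjTranspose_mul_mul_same U
  · rw [trace_mul_cycle, mul_eq_one_comm.mp hU, Matrix.one_mul, htr]

theorem diag_mem_Icc_of_mem_fantope (hZ : Z ∈ Fantope n k) (i : Fin n) : Z i i ∈ Set.Icc 0 1 := by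
  refine ⟨hZ.2.1.diag_nonneg, ?_⟩
  have := hZ.2.2.1.diag_nonneg (i := i)
  simpa [sub_nonneg] using this

theorem frobNorm_sub_sq_le (hZ : Z ∈ Fantope n k) {P : Matrix (Fin n) (Fin n) ℝ}
    (hP : P ∈ ProjSet n k) : frobNorm (Z - P) ^ 2 ≤ 2 * (k - (Z * P).trace) := by
  have hZZ := trace_mul_le_of_mem_fantope hZ hZ.2.2.1
  rw [frobNorm_sq, transpose_sub, hZ.1.eq, transpose_eq_of_mem_projSet hP, sub_mul, mul_sub,
    mul_sub, mul_self_of_mem_projSet hP, trace_sub, trace_sub, trace_sub, trace_of_mem_projSet hP,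
    trace_mul_comm P Z]
  linarith

theorem eq_of_mem_projSet_of_le_trace_mul {V P : Matrix (Fin n) (Fin n) ℝ}
    (hV : V ∈ ProjSet n k) (hP : P ∈ ProjSet n k) (h : k ≤ (V * P).trace) : V = P := by
  have hle := frobNorm_sub_sq_le (projSet_subset_fantope hV) hP
  have hzero : ((V - P)ᴴ * (V - P)).trace = 0 := by
    rw [conjTranspose_eq_transpose_of_trivial, ← frobNorm_sq]
    nlinarith [sq_nonneg (frobNorm (V - P))]
  exact sub_eq_zero.mp (trace_conjTranspose_mul_self_eq_zero_iff.mp hzero)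

end Fantope

theorem sub_mul_card_sub_sum_le_sum_mul_sub_sum {ι : Type*} [Fintype ι] [DecidableEq ι]
    (B : Finset ι) {d y : ι → ℝ} {a b : ℝ} (hlo : ∀ i ∈ B, d i ≤ a) (hhi : ∀ i ∉ B, b ≤ d i)
    (hy0 : ∀ i, 0 ≤ y i) (hy1 : ∀ i, y i ≤ 1) (hsum : ∑ i, y i = B.card) :
    (b - a) * (B.card - ∑ i ∈ B, y i) ≤ ∑ i, y i * d i - ∑ i ∈ B, d i := by
  have hcompl : ∑ i ∈ Bᶜ, y i = B.card - ∑ i ∈ B, y i := by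
    rw [← hsum, ← Finset.sum_add_sum_compl B y]; ring
  have hdefect : ∑ i ∈ B, (1 - y i) = B.card - ∑ i ∈ B, y i := by
    rw [Finset.sum_sub_distrib, Finset.sum_const, nsmul_one]
  have hout : b * ∑ i ∈ Bᶜ, y i ≤ ∑ i ∈ Bᶜ, y i * d i := by
    rw [Finset.mul_sum]
    exact Finset.sum_le_sum fun i hi =>
      by nlinarith [hy0 i, hhi i (Finset.mem_compl.mp hi)]
  have hin : ∑ i ∈ B, (1 - y i) * d i ≤ a * ∑ i ∈ B, (1 - y i) := by
    rw [Finset.mul_sum]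
    exact Finset.sum_le_sum fun i hi => by nlinarith [hy1 i, hlo i hi]
  have hsplit : ∑ i, y i * d i - ∑ i ∈ B, d i
      = ∑ i ∈ Bᶜ, y i * d i - ∑ i ∈ B, (1 - y i) * d i := by
    rw [← Finset.sum_add_sum_compl B (fun i => y i * d i)]
    simp only [sub_mul, one_mul, Finset.sum_sub_distrib]
    ring
  rw [hsplit]
  rw [hcompl] at hout
  rw [hdefect] at hin
  linarith

section Spectral

variable {n k : ℕ} {U : Matrix (Fin n) (Fin n) ℝ}

theorem submatrix_mul_transpose_mem_projSet (hU : Uᵀ * U = 1) (e : Fin k ↪ Fin n) :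
    U.submatrix id e * (U.submatrix id e)ᵀ ∈ ProjSet n k := by
  refine ⟨_, ?_, rfl⟩
  rw [transpose_submatrix, ← submatrix_mul _ _ _ _ _ Function.bijective_id, hU,
    submatrix_one_embedding]

theorem trace_mul_submatrix_mul_transpose (Z U : Matrix (Fin n) (Fin n) ℝ) (e : Fin k → Fin n) :
    (Z * (U.submatrix id e * (U.submatrix id e)ᵀ)).trace = ∑ l, (Uᵀ * Z * U) (e l) (e l) := by
  rw [← Matrix.mul_assoc, trace_mul_comm, ← Matrix.mul_assoc, transpose_submatrix]
  rfl

theorem gap_mul_sub_trace_le_trace_sub_mul (hU : Uᵀ * U = 1) {G : Matrix (Fin n) (Fin n) ℝ}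
    {d : Fin n → ℝ} (hG : G = U * diagonal d * Uᵀ) (e : Fin k ↪ Fin n) {a b : ℝ}
    (hlo : ∀ l, d (e l) ≤ a) (hhi : ∀ i ∉ Set.range e, b ≤ d i)
    {Z : Matrix (Fin n) (Fin n) ℝ} (hZ : Z ∈ Fantope n k) :
    (b - a) * (k - (Z * (U.submatrix id e * (U.submatrix id e)ᵀ)).trace)
      ≤ ((Z - U.submatrix id e * (U.submatrix id e)ᵀ) * G).trace := by
  set B : Finset (Fin n) := Finset.univ.map e
  set Y := Uᵀ * Z * U
  have hY := conj_mem_fantope hZ hU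
  have hZG : (Z * G).trace = ∑ i, Y i i * d i := by
    rw [hG, ← Matrix.mul_assoc, ← Matrix.mul_assoc, trace_mul_cycle, ← Matrix.mul_assoc]
    simp only [trace, diag, mul_diagonal, Y]
  have hPG : (U.submatrix id e * (U.submatrix id e)ᵀ * G).trace = ∑ i ∈ B, d i := by
    have hdiag : Uᵀ * G * U = diagonal d := by
      rw [hG, ← Matrix.mul_assoc, ← Matrix.mul_assoc, hU, Matrix.one_mul, Matrix.mul_assoc, hU,
        Matrix.mul_one]
    rw [trace_mul_comm, trace_mul_submatrix_mul_transpose, hdiag, Finset.sum_map]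
    simp
  have hZP : (Z * (U.submatrix id e * (U.submatrix id e)ᵀ)).trace = ∑ i ∈ B, Y i i := by
    rw [trace_mul_submatrix_mul_transpose, Finset.sum_map]
  have hB : B.card = k := by simp [B]
  have key := sub_mul_card_sub_sum_le_sum_mul_sub_sum B (d := d) (y := fun i => Y i i)
    (a := a) (b := b) (fun i hi => by obtain ⟨l, -, rfl⟩ := Finset.mem_map.mp hi; exact hlo l)
    (fun i hi => hhi i fun ⟨l, hl⟩ => hi (hl ▸ Finset.mem_map_of_mem e (Finset.mem_univ l)))
    (fun i => (diag_mem_Icc_of_mem_fantope hY i).1) (fun i => (diag_mem_Icc_of_mem_fantope hY i).2)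
    (by rw [hB]; exact hY.2.2.2)
  rw [hB] at key
  rw [Matrix.sub_mul, trace_sub, hZG, hPG, hZP]
  exact key

end Spectral

section Eigen

variable {n k : ℕ} {G : Matrix (Fin n) (Fin n) ℝ}

theorem eigval_sub_eq (hG : G.IsHermitian) {j : ℕ} (hj : j < n) :
    eigval G (n - j) = hG.eigenvalues (Tuple.sort hG.eigenvalues ⟨j, hj⟩) := by
  rw [eigval, dif_pos hG, dif_pos (by omega)]
  exact congrArg (hG.eigenvalues ∘ Tuple.sort hG.eigenvalues) (Fin.ext (Nat.sub_sub_self hj.le))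

theorem Matrix.IsHermitian.spectral_theorem_real (hG : G.IsHermitian) :
    G = (hG.eigenvectorUnitary : Matrix (Fin n) (Fin n) ℝ) * diagonal hG.eigenvalues *
      (hG.eigenvectorUnitary : Matrix (Fin n) (Fin n) ℝ)ᵀ := by
  conv_lhs => rw [hG.spectral_theorem]
  simp [Unitary.conjStarAlgAut_apply, star_eq_conjTranspose]

theorem exists_mem_projSet_eigval_gap_mul_le (hG : G.IsHermitian) (hk : 0 < k) (hkn : k < n) :
    ∃ P ∈ ProjSet n k, ∀ Z ∈ Fantope n k,
      (eigval G (n - k) - eigval G (n - k + 1)) * (k - (Z * P).trace) ≤ ((Z - P) * G).trace := by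
  set U := (hG.eigenvectorUnitary : Matrix (Fin n) (Fin n) ℝ)
  have hU : Uᵀ * U = 1 := by
    simpa [U, star_eq_conjTranspose] using hG.eigenvectorUnitary.prop.1
  set σ := Tuple.sort hG.eigenvalues
  have hmono : Monotone (hG.eigenvalues ∘ σ) := Tuple.monotone_sort _
  let e : Fin k ↪ Fin n := (Fin.castLEEmb hkn.le).trans σ.toEmbedding
  refine ⟨_, submatrix_mul_transpose_mem_projSet hU e, fun Z hZ =>
    gap_mul_sub_trace_le_trace_sub_mul hU hG.spectral_theorem_real e (fun l => ?_)
      (fun i hi => ?_) hZ⟩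
  · rw [show n - k + 1 = n - (k - 1) by omega, eigval_sub_eq hG (by omega)]
    exact hmono (Fin.le_def.mpr (show (l : ℕ) ≤ k - 1 by omega))
  · have hik : k ≤ σ.symm i := by
      by_contra! h
      exact hi ⟨⟨σ.symm i, h⟩, by simp [e]⟩
    rw [eigval_sub_eq hG hkn, ← σ.apply_symm_apply i]
    exact hmono (Fin.mk_le_mk.mpr hik)

end Eigen

theorem stmt16_general {n k : ℕ} (hk : 0 < k) (hkn : k < n)
    (grad : Matrix (Fin n) (Fin n) ℝ → Matrix (Fin n) (Fin n) ℝ)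
    (hgradSymm : ∀ X : Matrix (Fin n) (Fin n) ℝ, (grad X).IsSymm)
    (X : Matrix (Fin n) (Fin n) ℝ) (hX : X ∈ Fantope n k)
    (δX : ℝ) (hδX : 0 < δX)
    (hgapX : δX ≤ eigval (grad X) (n - k) - eigval (grad X) (n - k + 1))
    (V : Matrix (Fin n) (Fin n) ℝ) (hV : V ∈ ProjSet n k)
    (hVmin : ∀ P ∈ ProjSet n k, (V * grad X).trace ≤ (P * grad X).trace) :
    δX / 2 * frobNorm (X - V) ^ 2 ≤ ((X - V) * grad X).trace := by
  have hG : (grad X).IsHermitian := by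
    rw [IsHermitian, conjTranspose_eq_transpose_of_trivial]
    exact hgradSymm X
  obtain ⟨P, hP, hgap⟩ := exists_mem_projSet_eigval_gap_mul_le hG hk hkn
  obtain rfl : V = P := by
    refine eq_of_mem_projSet_of_le_trace_mul hV hP ?_
    have h := hgap V (projSet_subset_fantope hV)
    rw [Matrix.sub_mul, trace_sub] at h
    have := nonpos_of_mul_nonpos_right (h.trans (sub_nonpos.mpr (hVmin P hP)))
      (hδX.trans_le hgapX)
    linarith
  have hXV := trace_mul_le_of_mem_fantope hX (projSet_subset_fantope hV).2.2.1
  calc δX / 2 * frobNorm (X - V) ^ 2 ≤ δX / 2 * (2 * (k - (X * V).trace)) :=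
        mul_le_mul_of_nonneg_left (frobNorm_sub_sq_le hX hV) (by positivity)
    _ ≤ (eigval (grad X) (n - k) - eigval (grad X) (n - k + 1)) * (k - (X * V).trace) := by
        linarith [mul_le_mul_of_nonneg_right hgapX (sub_nonneg.mpr hXV)]
    _ ≤ ((X - V) * grad X).trace := hgap X hX

theorem stmt16 {n k : ℕ} (hk : 0 < k) (hkn : k < n)
    (f : Matrix (Fin n) (Fin n) ℝ → ℝ)
    (grad : Matrix (Fin n) (Fin n) ℝ → Matrix (Fin n) (Fin n) ℝ)
    (hgradSymm : ∀ X : Matrix (Fin n) (Fin n) ℝ, (grad X).IsSymm)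
    (X : Matrix (Fin n) (Fin n) ℝ) (hX : X ∈ Fantope n k)
    (δX : ℝ) (hδX : 0 < δX)
    (hgapX : δX ≤ eigval (grad X) (n - k) - eigval (grad X) (n - k + 1))
    (V : Matrix (Fin n) (Fin n) ℝ) (hV : V ∈ ProjSet n k)
    (hVmin : ∀ P ∈ ProjSet n k, (V * grad X).trace ≤ (P * grad X).trace) :
    δX / 2 * frobNorm (X - V) ^ 2 ≤ ((X - V) * grad X).trace :=
  stmt16_general hk hkn grad hgradSymm X hX δX hδX hgapX V hV hVmin
end
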